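/- For n ≥ 2, the matrix Q (as above, the intersection form of C_n) is negative definite. -/

import Mathlib

/-!
Off the diagonal, `Q` is the adjacency matrix of the path graph on `n - 1` vertices, so
`Q = diag(c) - L` with `L` the Laplacian of the path and `c i = Q i i + deg i`; since degrees in
a path are at most `2`, `c ≤ 0` and `c 0 ≤ -n < 0`. The form `xᵀ L x = ∑_{i ~ j} (x i - x j)²`
is nonnegative and vanishes only on constant vectors because the path is connected, while
`∑ c i * x i ^ 2 ≤ 0` vanishes only if `x 0 = 0`.
-/

open Finset Matrix

namespace SimpleGraph

variable {V : Type*} [Fintype V] [DecidableEq V] (G : SimpleGraph V) [DecidableRel G.Adj]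

theorem eq_diagonal_sub_lapMatrix {M : Matrix V V ℝ}
    (hM : ∀ i j, i ≠ j → M i j = if G.Adj i j then 1 else 0) :
    M = diagonal (fun i ↦ M i i + G.degree i) - G.lapMatrix ℝ := by
  ext i j
  rcases eq_or_ne i j with rfl | hij
  · simp [lapMatrix, degMatrix]
  · simp [lapMatrix, degMatrix, hij, hM i j hij]

variable {G}

theorem dotProduct_diagonal_sub_lapMatrix_mulVec_neg (hG : G.Preconnected) {c : V → ℝ}
    (hc : ∀ i, c i ≤ 0) {v : V} (hv : c v < 0) {x : V → ℝ} (hx : x ≠ 0) :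
    x ⬝ᵥ ((diagonal c - G.lapMatrix ℝ) *ᵥ x) < 0 := by
  have hdiag : x ⬝ᵥ (diagonal c *ᵥ x) = ∑ i, c i * x i ^ 2 := by
    simp only [dotProduct, mulVec_diagonal]
    exact sum_congr rfl fun i _ ↦ by ring
  have hterm : ∀ i, c i * x i ^ 2 ≤ 0 := fun i ↦
    mul_nonpos_of_nonpos_of_nonneg (hc i) (sq_nonneg _)
  have hlap : 0 ≤ x ⬝ᵥ (G.lapMatrix ℝ *ᵥ x) := by
    simpa using (posSemidef_lapMatrix ℝ G).dotProduct_mulVec_nonneg x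
  have hdiag_nonpos : ∑ i, c i * x i ^ 2 ≤ 0 := sum_nonpos fun i _ ↦ hterm i
  rw [sub_mulVec, dotProduct_sub, hdiag]
  refine lt_of_le_of_ne (by linarith) fun h0 ↦ hx ?_
  have hconst : ∀ i, x i = x v := by
    have : toLinearMap₂' ℝ (G.lapMatrix ℝ) x x = 0 := by
      rw [toLinearMap₂'_apply']
      linarith
    exact fun i ↦
      (G.lapMatrix_toLinearMap₂'_apply'_eq_zero_iff_forall_reachable x).1 this i v (hG i v)
  have hxv : x v = 0 := by
    have hsum : ∑ i, c i * x i ^ 2 = 0 := by linarith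
    have := (sum_eq_zero_iff_of_nonpos fun i _ ↦ hterm i).1 hsum v (mem_univ v)
    simpa [hv.ne] using this
  funext i
  rw [hconst i, hxv, Pi.zero_apply]

instance (m : ℕ) : DecidableRel (pathGraph m).Adj := fun _ _ ↦
  decidable_of_iff' _ pathGraph_adj

theorem pathGraph_degree_le_two {m : ℕ} (v : Fin m) : (pathGraph m).degree v ≤ 2 := by
  rw [← card_neighborFinset_eq_degree]
  calc #((pathGraph m).neighborFinset v) ≤ #({(v : ℕ) - 1, (v : ℕ) + 1} : Finset ℕ) := by
        refine card_le_card_of_injOn Fin.val (fun w hw ↦ ?_) Fin.val_injective.injOn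
        rw [mem_coe, mem_neighborFinset, pathGraph_adj] at hw
        simp only [coe_insert, coe_singleton, Set.mem_insert_iff, Set.mem_singleton_iff]
        omega
    _ ≤ 2 := card_le_two

end SimpleGraph

open SimpleGraph

theorem intersection_matrix_Cn_negDef_general (n : ℕ)
    (Q : Matrix (Fin (n - 1)) (Fin (n - 1)) ℝ)
    (hQ : ∀ i j : Fin (n - 1), Q i j =
      if i = j then (if (i : ℕ) = 0 then -((n : ℝ) + 2) else -2)
      else if (i : ℕ) + 1 = (j : ℕ) ∨ (j : ℕ) + 1 = (i : ℕ) then 1 else 0) :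
    ∀ x : Fin (n - 1) → ℝ, x ≠ 0 → dotProduct x (Q.mulVec x) < 0 := by
  intro x hx
  have hpos : 0 < n - 1 := Nat.pos_of_ne_zero fun h ↦ hx (funext fun i ↦ (h ▸ i).elim0)
  have hQ_path : Q = diagonal (fun i ↦ Q i i + (pathGraph (n - 1)).degree i) -
      (pathGraph (n - 1)).lapMatrix ℝ :=
    eq_diagonal_sub_lapMatrix _ fun i j hij ↦ by
      simp only [hQ i j, if_neg hij, pathGraph_adj]
  have hdeg (i : Fin (n - 1)) : ((pathGraph (n - 1)).degree i : ℝ) ≤ 2 := by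
    exact_mod_cast pathGraph_degree_le_two i
  have hdiag (i : Fin (n - 1)) : Q i i ≤ -2 := by
    rw [hQ i i, if_pos rfl]
    split_ifs <;> linarith [(n.cast_nonneg : (0 : ℝ) ≤ n)]
  rw [hQ_path]
  refine dotProduct_diagonal_sub_lapMatrix_mulVec_neg
    (pathGraph_preconnected _) (fun i ↦ by linarith [hdiag i, hdeg i]) (v := ⟨0, hpos⟩) ?_ hx
  have hn : (1 : ℝ) ≤ n := by exact_mod_cast (by omega : 1 ≤ n)
  rw [hQ, if_pos rfl, if_pos rfl]
  linarith [hdeg ⟨0, hpos⟩]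

/-- The intersection matrix of the plumbing `C_n` is negative definite:
for every nonzero real vector `x`, `xᵀ Q x < 0`. -/
theorem intersection_matrix_Cn_negDef (n : ℕ) (hn : 2 ≤ n)
    (Q : Matrix (Fin (n - 1)) (Fin (n - 1)) ℝ)
    (hQ : ∀ i j : Fin (n - 1), Q i j =
      if i = j then (if (i : ℕ) = 0 then -((n : ℝ) + 2) else -2)
      else if (i : ℕ) + 1 = (j : ℕ) ∨ (j : ℕ) + 1 = (i : ℕ) then 1 else 0) :
    ∀ x : Fin (n - 1) → ℝ, x ≠ 0 → dotProduct x (Q.mulVec x) < 0 :=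
  intersection_matrix_Cn_negDef_general n Q hQ
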